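/- Let 0 < η < 1/e. There exists a constant C > 0 such that for every real z with z ≠ 0, the series ∑_{k=1}^∞ sin²(k z) / k³ converges and ∑_{k=1}^∞ sin²(k z) / k³ ≤ C·z²·κ̃₂(|z|). -/

import Mathlib

/-!
Write `t = |z|`. For `t ≤ η`, split the series at `N = ⌊1/t⌋`. Below `N`, `sin² (k z) ≤ k² z²`
bounds the head by `z² H_N ≤ z² (1 + log N)`; above `N`, `sin² ≤ 1` bounds the tail by
`∑_{k > N} k⁻³ ≤ 1/(2N(N+1)) ≤ t²`. As `log (1/t) ≥ log (1/η) ≥ 1`, both are `O(z² log (1/t))`.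
For `t > η` the series is at most `ζ(3) ≤ 5/4`, while `z² ≥ η²` and `κ̃₂(t) ≥ 1/4`.
-/

open Real

/-- `κ̃₂(x) = log(1/x)` for `0 < x ≤ η`, and for `x > η`,
`κ̃₂(x) = (((log(1/η))^{1/2} − (1/2)(log(1/η))^{−1/2})·x + (1/2)(log(1/η))^{−1/2}·η)² / x²`. -/
noncomputable def kappa2 (η x : ℝ) : ℝ :=
  if x ≤ η then Real.log (1 / x)
  else ((Real.sqrt (Real.log (1 / η)) - (1 / 2) * (Real.sqrt (Real.log (1 / η)))⁻¹) * x
        + (1 / 2) * (Real.sqrt (Real.log (1 / η)))⁻¹ * η) ^ 2 / x ^ 2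

open Finset

lemma summable_one_div_succ_pow_three : Summable (fun k : ℕ => 1 / ((k : ℝ) + 1) ^ 3) := by
  have h := (summable_nat_add_iff 1).2 (summable_one_div_nat_pow.2 (by norm_num : 1 < 3))
  exact h.congr fun k => by push_cast; ring

/-- `1 / (2x(x+1)) - 1 / (2(x+1)(x+2)) = 1 / (x(x+1)(x+2))`, so the tail of `∑ k⁻³` telescopes. -/
lemma one_div_succ_pow_three_le_sub {x : ℝ} (hx : 0 < x) :
    1 / (x + 1) ^ 3 ≤ 1 / (2 * x * (x + 1)) - 1 / (2 * (x + 1) * (x + 1 + 1)) := by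
  have hsub : 1 / (2 * x * (x + 1)) - 1 / (2 * (x + 1) * (x + 1 + 1)) =
      1 / (x * (x + 1) * (x + 2)) := by
    field_simp
    ring
  rw [hsub]
  apply one_div_le_one_div_of_le (by positivity)
  nlinarith

lemma tsum_one_div_add_succ_pow_three_le {N : ℕ} (hN : 1 ≤ N) :
    ∑' k : ℕ, 1 / ((k : ℝ) + N + 1) ^ 3 ≤ 1 / (2 * (N : ℝ) * (N + 1)) := by
  set G : ℕ → ℝ := fun m => 1 / (2 * ((m + N : ℕ) : ℝ) * ((m + N : ℕ) + 1))
  refine tsum_le_of_sum_range_le (fun _ => by positivity) fun n => ?_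
  calc ∑ k ∈ range n, 1 / ((k : ℝ) + N + 1) ^ 3
      ≤ ∑ k ∈ range n, (G k - G (k + 1)) := by
        refine sum_le_sum fun k _ => ?_
        have hkN : (0 : ℝ) < k + N := by positivity
        simpa [G, add_assoc, add_comm, add_left_comm] using
          one_div_succ_pow_three_le_sub hkN
    _ = G 0 - G n := sum_range_sub' G n
    _ ≤ G 0 := sub_le_self _ (by positivity)
    _ = 1 / (2 * (N : ℝ) * (N + 1)) := by simp [G]

lemma tsum_one_div_succ_pow_three_le_five_div_four : ∑' k : ℕ, 1 / ((k : ℝ) + 1) ^ 3 ≤ 5 / 4 := by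
  rw [← summable_one_div_succ_pow_three.sum_add_tsum_nat_add 1]
  have htail := tsum_one_div_add_succ_pow_three_le (N := 1) le_rfl
  norm_num at htail ⊢
  linarith

section SinSqSeries

variable (z : ℝ)

lemma sin_sq_mul_div_pow_three_le_one_div {x : ℝ} (hx : 0 < x) :
    sin (x * z) ^ 2 / x ^ 3 ≤ 1 / x ^ 3 := by
  gcongr
  exact sin_sq_le_one _

lemma sin_sq_mul_div_pow_three_le_sq_div {x : ℝ} (hx : 0 < x) :
    sin (x * z) ^ 2 / x ^ 3 ≤ z ^ 2 / x :=
  calc sin (x * z) ^ 2 / x ^ 3 ≤ (x * z) ^ 2 / x ^ 3 := by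
        gcongr ?_ / _
        exact sin_sq_le_sq
    _ = z ^ 2 / x := by field_simp

lemma summable_sin_sq_mul_div_pow_three :
    Summable (fun k : ℕ => sin ((k + 1 : ℝ) * z) ^ 2 / ((k : ℝ) + 1) ^ 3) :=
  summable_one_div_succ_pow_three.of_nonneg_of_le (fun _ => by positivity)
    fun _ => sin_sq_mul_div_pow_three_le_one_div z (by positivity)

lemma tsum_sin_sq_mul_div_pow_three_le_five_div_four :
    ∑' k : ℕ, sin ((k + 1 : ℝ) * z) ^ 2 / ((k : ℝ) + 1) ^ 3 ≤ 5 / 4 :=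
  (Summable.tsum_le_tsum (fun _ => sin_sq_mul_div_pow_three_le_one_div z (by positivity))
    (summable_sin_sq_mul_div_pow_three z) summable_one_div_succ_pow_three).trans
    tsum_one_div_succ_pow_three_le_five_div_four

lemma sum_range_sin_sq_mul_div_pow_three_le (N : ℕ) :
    ∑ k ∈ range N, sin ((k + 1 : ℝ) * z) ^ 2 / ((k : ℝ) + 1) ^ 3 ≤ z ^ 2 * (1 + log N) :=
  calc ∑ k ∈ range N, sin ((k + 1 : ℝ) * z) ^ 2 / ((k : ℝ) + 1) ^ 3
      ≤ ∑ k ∈ range N, z ^ 2 / ((k : ℝ) + 1) :=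
        sum_le_sum fun _ _ => sin_sq_mul_div_pow_three_le_sq_div z (by positivity)
    _ = z ^ 2 * harmonic N := by simp [harmonic, mul_sum, div_eq_mul_inv]
    _ ≤ z ^ 2 * (1 + log N) := by gcongr; exact harmonic_le_one_add_log N

lemma tsum_sin_sq_mul_div_pow_three_add_le {N : ℕ} (hN : 1 ≤ N) :
    ∑' k : ℕ, sin (((k + N : ℕ) + 1 : ℝ) * z) ^ 2 / (((k + N : ℕ) : ℝ) + 1) ^ 3 ≤
      1 / (2 * (N : ℝ) * (N + 1)) :=
  calc ∑' k : ℕ, sin (((k + N : ℕ) + 1 : ℝ) * z) ^ 2 / (((k + N : ℕ) : ℝ) + 1) ^ 3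
      ≤ ∑' k : ℕ, 1 / ((k : ℝ) + N + 1) ^ 3 := by
        refine Summable.tsum_le_tsum (fun k => ?_)
          ((summable_nat_add_iff N).2 (summable_sin_sq_mul_div_pow_three z)) ?_
        · simpa using sin_sq_mul_div_pow_three_le_one_div z (x := (k + N : ℕ) + 1) (by positivity)
        · exact ((summable_nat_add_iff N).2 summable_one_div_succ_pow_three).congr
            fun k => by push_cast; ring
    _ ≤ 1 / (2 * (N : ℝ) * (N + 1)) := tsum_one_div_add_succ_pow_three_le hN

lemma tsum_sin_sq_mul_div_pow_three_le_mul_log (hz : 1 ≤ log (1 / |z|)) :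
    ∑' k : ℕ, sin ((k + 1 : ℝ) * z) ^ 2 / ((k : ℝ) + 1) ^ 3 ≤ 3 * z ^ 2 * log (1 / |z|) := by
  have ht : 0 < |z| := by
    refine (abs_nonneg z).lt_of_ne fun h => ?_
    norm_num [← h] at hz
  have hexp : exp 1 ≤ 1 / |z| := (le_log_iff_exp_le (by positivity)).1 hz
  set N := ⌊1 / |z|⌋₊
  have hN : 1 ≤ N := Nat.le_floor (by push_cast; linarith [one_le_exp zero_le_one])
  have hNle : (N : ℝ) ≤ 1 / |z| := Nat.floor_le (by positivity)
  have hNlt : 1 < (N + 1) * |z| := (div_lt_iff₀ ht).1 (Nat.lt_floor_add_one _)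
  have hhead : ∑ k ∈ range N, sin ((k + 1 : ℝ) * z) ^ 2 / ((k : ℝ) + 1) ^ 3 ≤
      2 * z ^ 2 * log (1 / |z|) := by
    have hlogN : log N ≤ log (1 / |z|) := log_le_log (by positivity) hNle
    calc _ ≤ z ^ 2 * (1 + log N) := sum_range_sin_sq_mul_div_pow_three_le z N
      _ ≤ 2 * z ^ 2 * log (1 / |z|) := by nlinarith [sq_nonneg z]
  have htail : 1 / (2 * (N : ℝ) * (N + 1)) ≤ z ^ 2 * log (1 / |z|) := by
    have hsq : 1 / (2 * (N : ℝ) * (N + 1)) ≤ z ^ 2 := by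
      have h2N : 1 < 2 * N * |z| := by
        have hN' : (1 : ℝ) ≤ N := by exact_mod_cast hN
        nlinarith
      rw [div_le_iff₀ (by positivity), ← sq_abs]
      nlinarith [mul_lt_mul'' h2N hNlt zero_le_one zero_le_one]
    nlinarith [sq_nonneg z]
  rw [← (summable_sin_sq_mul_div_pow_three z).sum_add_tsum_nat_add N]
  linarith [tsum_sin_sq_mul_div_pow_three_add_le z hN]

end SinSqSeries

lemma one_le_log_one_div_of_lt {η : ℝ} (hη₀ : 0 < η) (hη₁ : η < 1 / exp 1) :
    1 ≤ log (1 / η) :=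
  (le_log_iff_exp_le (by positivity)).2 ((lt_one_div hη₀ (exp_pos 1)).1 hη₁).le

/-- For `√(log (1/η)) ≥ 1` the numerator in the definition of `κ̃₂` is at least `x / 2`. -/
lemma one_div_four_le_kappa2 {η x : ℝ} (hη : 0 ≤ η) (hL : 1 ≤ log (1 / η)) (hx : η < x) :
    1 / 4 ≤ kappa2 η x := by
  have hx0 : 0 < x := hη.trans_lt hx
  set s := √(log (1 / η))
  have hs : 1 ≤ s := one_le_sqrt.2 hL
  have hnum : x / 2 ≤ (s - 1 / 2 * s⁻¹) * x + 1 / 2 * s⁻¹ * η := by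
    have hs' : s⁻¹ ≤ 1 := inv_le_one_of_one_le₀ hs
    have hsη : 0 ≤ s⁻¹ * η := by positivity
    nlinarith
  rw [kappa2, if_neg hx.not_ge, le_div_iff₀ (by positivity)]
  nlinarith [mul_self_le_mul_self (by positivity) hnum]

/-- For `0 < η < 1/e` there is `C > 0` such that for every `z ≠ 0`, the series
`∑_{k≥1} sin²(kz)/k³` converges and is bounded by `C·z²·κ̃₂(|z|)`. -/
theorem sum_sin_sq_div_cube_le (η : ℝ) (hη₀ : 0 < η) (hη₁ : η < 1 / Real.exp 1) :
    ∃ C : ℝ, 0 < C ∧ ∀ z : ℝ, z ≠ 0 →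
      Summable (fun k : ℕ => Real.sin ((k + 1 : ℝ) * z) ^ 2 / ((k : ℝ) + 1) ^ 3) ∧
      (∑' k : ℕ, Real.sin ((k + 1 : ℝ) * z) ^ 2 / ((k : ℝ) + 1) ^ 3) ≤
        C * z ^ 2 * kappa2 η |z| := by
  have hL := one_le_log_one_div_of_lt hη₀ hη₁
  refine ⟨3 + 5 / η ^ 2, by positivity, fun z hz => ⟨summable_sin_sq_mul_div_pow_three z, ?_⟩⟩
  have hz' : 0 < |z| := abs_pos.2 hz
  rcases le_or_gt |z| η with hsmall | hlarge
  · have hlog : 1 ≤ log (1 / |z|) :=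
      hL.trans (log_le_log (by positivity) (one_div_le_one_div_of_le hz' hsmall))
    rw [kappa2, if_pos hsmall]
    calc _ ≤ 3 * z ^ 2 * log (1 / |z|) := tsum_sin_sq_mul_div_pow_three_le_mul_log z hlog
      _ ≤ (3 + 5 / η ^ 2) * z ^ 2 * log (1 / |z|) := by
          gcongr
          exact le_add_of_nonneg_right (by positivity)
  · have hη2 : η ^ 2 ≤ z ^ 2 := sq_abs z ▸ pow_le_pow_left₀ hη₀.le hlarge.le 2
    calc _ ≤ 5 / 4 := tsum_sin_sq_mul_div_pow_three_le_five_div_four z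
      _ = 5 / η ^ 2 * η ^ 2 * (1 / 4) := by field_simp
      _ ≤ (3 + 5 / η ^ 2) * z ^ 2 * kappa2 η |z| := by
          gcongr
          · exact le_add_of_nonneg_left zero_le_three
          · exact one_div_four_le_kappa2 hη₀.le hL hlarge
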